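/- For every real number α with 0 < α < 2, f(α) ≤ f(2 − (2/5)·√5), where f(α) = ((4−α)/α)^α · ((4−α)/(4−2α))^{4−2α}; that is, f attains its maximum on (0,2) at α₀ = 2 − (2/5)·√5. -/
import Mathlib


/-- `f(α) = ((4-α)/α)^α · ((4-α)/(4-2α))^{4-2α}` (real powers). -/
noncomputable def fKEP (α : ℝ) : ℝ :=
  ((4 - α) / α) ^ α * ((4 - α) / (4 - 2 * α)) ^ (4 - 2 * α)

noncomputable def gKEP (x : ℝ) : ℝ :=
  (4 - x) * Real.log (4 - x) - x * Real.log x - (4 - 2 * x) * Real.log (4 - 2 * x)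

lemma fKEP_eq (x : ℝ) (h0 : 0 < x) (h2 : x < 2) : fKEP x = Real.exp (gKEP x) := by
  have h4 : (0:ℝ) < 4 - x := by linarith
  have h42 : (0:ℝ) < 4 - 2 * x := by linarith
  have hb1 : (0:ℝ) < (4 - x) / x := div_pos h4 h0
  have hb2 : (0:ℝ) < (4 - x) / (4 - 2 * x) := div_pos h4 h42
  rw [fKEP, Real.rpow_def_of_pos hb1, Real.rpow_def_of_pos hb2, ← Real.exp_add]
  congr 1
  rw [Real.log_div h4.ne' h0.ne', Real.log_div h4.ne' h42.ne', gKEP]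
  ring

lemma gKEP_hasDeriv (x : ℝ) (h0 : 0 < x) (h2 : x < 2) :
    HasDerivAt gKEP (2 * Real.log (4 - 2 * x) - Real.log (4 - x) - Real.log x) x := by
  have h4 : (4 - x) ≠ 0 := by linarith
  have h42 : (4 - 2 * x) ≠ 0 := by linarith
  have H1 : HasDerivAt (fun y : ℝ => (4 - y) * Real.log (4 - y))
      ((Real.log (4 - x) + 1) * (-1)) x := by
    have hin : HasDerivAt (fun y : ℝ => 4 - y) (-1) x := (hasDerivAt_id x).const_sub 4
    exact (Real.hasDerivAt_mul_log h4).comp x hin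
  have H2 : HasDerivAt (fun y : ℝ => y * Real.log y) (Real.log x + 1) x :=
    Real.hasDerivAt_mul_log h0.ne'
  have H3 : HasDerivAt (fun y : ℝ => (4 - 2 * y) * Real.log (4 - 2 * y))
      ((Real.log (4 - 2 * x) + 1) * (-2)) x := by
    have hin : HasDerivAt (fun y : ℝ => 4 - 2 * y) (-2) x := by
      simpa using ((hasDerivAt_id x).const_mul 2).const_sub 4
    exact (Real.hasDerivAt_mul_log h42).comp x hin
  have H := (H1.sub H2).sub H3
  have hval : (Real.log (4 - x) + 1) * (-1) - (Real.log x + 1)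
      - (Real.log (4 - 2 * x) + 1) * (-2)
      = 2 * Real.log (4 - 2 * x) - Real.log (4 - x) - Real.log x := by ring
  rw [hval] at H
  exact H

/-- On `(0,2)`, `f` attains its maximum at `α₀ = 2 - (2/5)·√5`. -/
theorem f_le_max (α : ℝ) (h0 : 0 < α) (h2 : α < 2) :
    fKEP α ≤ fKEP (2 - (2 / 5) * Real.sqrt 5) := by
  set a0 : ℝ := 2 - (2 / 5) * Real.sqrt 5 with ha0def
  have hs5 : Real.sqrt 5 ^ 2 = 5 := Real.sq_sqrt (by norm_num)
  have hs5lb : 2 < Real.sqrt 5 := by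
    have : (2:ℝ) = Real.sqrt 4 := by
      rw [show (4:ℝ) = 2^2 by norm_num, Real.sqrt_sq (by norm_num : (0:ℝ) ≤ 2)]
    rw [this]; exact Real.sqrt_lt_sqrt (by norm_num) (by norm_num)
  have hs5ub : Real.sqrt 5 < 9/4 := by
    have : Real.sqrt 5 < Real.sqrt (81/16) := Real.sqrt_lt_sqrt (by norm_num) (by norm_num)
    calc Real.sqrt 5 < Real.sqrt (81/16) := this
      _ = 9/4 := by
        rw [show (81/16:ℝ) = (9/4)^2 by norm_num, Real.sqrt_sq (by norm_num : (0:ℝ) ≤ 9/4)]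
  have ha0pos : 0 < a0 := by rw [ha0def]; nlinarith
  have ha0lt : a0 < 2 := by rw [ha0def]; nlinarith
  -- derivative sign lemmas
  have hderiv_pos : ∀ x : ℝ, 0 < x → x < a0 →
      0 < 2 * Real.log (4 - 2 * x) - Real.log (4 - x) - Real.log x := by
    intro x hx hxa
    have hx2 : x < 2 := lt_trans hxa ha0lt
    have h4 : (0:ℝ) < 4 - x := by linarith
    have h42 : (0:ℝ) < 4 - 2 * x := by linarith
    have hlt : x * (4 - x) < (4 - 2 * x)^2 := by
      have hxa' : x < 2 - (2/5) * Real.sqrt 5 := by rwa [ha0def] at hxa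
      nlinarith [hs5, hs5lb, sq_nonneg (2 - x - (2/5) * Real.sqrt 5)]
    have hlog := Real.log_lt_log (mul_pos hx h4) hlt
    rw [Real.log_mul hx.ne' h4.ne', Real.log_pow] at hlog
    push_cast at hlog
    linarith
  have hderiv_neg : ∀ x : ℝ, a0 < x → x < 2 →
      2 * Real.log (4 - 2 * x) - Real.log (4 - x) - Real.log x < 0 := by
    intro x hxa hx2
    have hx : 0 < x := lt_trans ha0pos hxa
    have h4 : (0:ℝ) < 4 - x := by linarith
    have h42 : (0:ℝ) < 4 - 2 * x := by linarith
    have hlt : (4 - 2 * x)^2 < x * (4 - x) := by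
      have hxa' : 2 - (2/5) * Real.sqrt 5 < x := by rwa [ha0def] at hxa
      nlinarith [hs5, hs5lb, sq_nonneg (x - 2 + (2/5) * Real.sqrt 5)]
    have hlog := Real.log_lt_log (by positivity) hlt
    rw [Real.log_mul hx.ne' h4.ne', Real.log_pow] at hlog
    push_cast at hlog
    linarith
  rw [fKEP_eq α h0 h2, fKEP_eq a0 ha0pos ha0lt, Real.exp_le_exp]
  rcases lt_trichotomy α a0 with h | h | h
  · -- increasing on [α, a0]
    have hmono : StrictMonoOn gKEP (Set.Icc α a0) := by
      apply strictMonoOn_of_deriv_pos (convex_Icc α a0)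
      · intro x hx
        exact (gKEP_hasDeriv x (lt_of_lt_of_le h0 hx.1)
          (lt_of_le_of_lt hx.2 ha0lt)).continuousAt.continuousWithinAt
      · intro x hx
        rw [interior_Icc] at hx
        have hx0 : 0 < x := lt_trans h0 hx.1
        rw [(gKEP_hasDeriv x hx0 (lt_trans hx.2 ha0lt)).deriv]
        exact hderiv_pos x hx0 hx.2
    exact (hmono (Set.left_mem_Icc.2 h.le) (Set.right_mem_Icc.2 h.le) h).le
  · rw [h]
  · -- decreasing on [a0, α]
    have hanti : StrictAntiOn gKEP (Set.Icc a0 α) := by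
      apply strictAntiOn_of_deriv_neg (convex_Icc a0 α)
      · intro x hx
        exact (gKEP_hasDeriv x (lt_of_lt_of_le ha0pos hx.1)
          (lt_of_le_of_lt hx.2 h2)).continuousAt.continuousWithinAt
      · intro x hx
        rw [interior_Icc] at hx
        have hx2 : x < 2 := lt_trans hx.2 h2
        rw [(gKEP_hasDeriv x (lt_trans ha0pos hx.1) hx2).deriv]
        exact hderiv_neg x hx.1 hx2
    exact (hanti (Set.left_mem_Icc.2 h.le) (Set.right_mem_Icc.2 h.le) h).le
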